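/- Define α ⊙̄ m = (α * m)^u for α ∈ L and m ∈ M D. Then for all α, β ∈ L and m ∈ M D: α ⊙̄ (β ⊙̄ m) = (α * β) ⊙̄ m. -/
import Mathlib


open Classical

variable {D D' L : Type*}

/-- `a` is way below `b`. -/
def WayBelow [Preorder D] (a b : D) : Prop :=
  ∀ S : Set D, S.Nonempty → DirectedOn (· ≤ ·) S → ∀ s : D, IsLUB S s → b ≤ s → ∃ c ∈ S, a ≤ c

/-- Directed-complete poset. -/
def IsDCPO (D : Type*) [Preorder D] : Prop :=
  ∀ S : Set D, S.Nonempty → DirectedOn (· ≤ ·) S → ∃ s : D, IsLUB S s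

/-- A domain: a continuous directed-complete poset. -/
def IsFuzzyDomain (D : Type*) [Preorder D] : Prop :=
  IsDCPO D ∧ ∀ b : D, DirectedOn (· ≤ ·) {a | WayBelow a b} ∧ IsLUB {a | WayBelow a b} b

/-- An `L`-fuzzy monotonic predicate on `D`: an antitone map sending directed
suprema in `D` to infima in `L` (i.e. a Scott-continuous map `D → Lᵒᵖ`). -/
def IsMonPred [Preorder D] [CompleteLattice L] (m : D → L) : Prop :=
  Antitone m ∧ ∀ S : Set D, S.Nonempty → DirectedOn (· ≤ ·) S →
    ∀ s : D, IsLUB S s → m s = ⨅ c ∈ S, m c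

/-- `η d₀` sends `d` to `1` if `d ≤ d₀` and to `0` otherwise. -/
noncomputable def eta [Preorder D] (L : Type*) [CompleteLattice L] (d₀ : D) : D → L :=
  fun d => if d ≤ d₀ then ⊤ else ⊥

/-- `f^u b = ⨅ { f a ∣ a ≪ b }`, the monotonic-predicate hull. -/
noncomputable def uHull [Preorder D] [CompleteLattice L] (f : D → L) : D → L :=
  fun b => ⨅ a ∈ {a | WayBelow a b}, f a

/-- `α ⊙̄ m = (α * m)^u`. -/
noncomputable def smulMP [Preorder D] [CompleteLattice L] (mul : L → L → L)
    (α : L) (m : D → L) : D → L :=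
  uHull (fun d => mul α (m d))

/-- Strongest postcondition transformer:
`sp(φ)(m)(b) = ⨅_{b' ≪ b} ⨆_{a} m a * φ a b'`. -/
noncomputable def sp [Preorder D] [Preorder D'] [CompleteLattice L]
    (mul : L → L → L) (φ : D → D' → L) (m : D → L) : D' → L :=
  fun b => ⨅ b' ∈ {b' | WayBelow b' b}, ⨆ a : D, mul (m a) (φ a b')

/-- Scott continuity of `φ : D → M D'`: `φ` sends a directed supremum in `D`
to the supremum of the image in the poset of monotonic predicates on `D'`. -/
def ScottContTo [Preorder D] [Preorder D'] [CompleteLattice L] (φ : D → D' → L) : Prop :=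
  ∀ S : Set D, S.Nonempty → DirectedOn (· ≤ ·) S → ∀ s : D, IsLUB S s →
    (∀ d ∈ S, φ d ≤ φ s) ∧ ∀ m : D' → L, IsMonPred m → (∀ d ∈ S, φ d ≤ m) → φ s ≤ m


lemma wb_le' [Preorder D] {a b : D} (h : WayBelow a b) : a ≤ b := by
  obtain ⟨c, hc, hac⟩ := h {b} ⟨b, rfl⟩
    (fun x hx y hy => ⟨b, rfl, le_of_eq hx, le_of_eq hy⟩) b isLUB_singleton le_rfl
  exact hac.trans (le_of_eq hc)

lemma le_wb' [Preorder D] {a b c : D} (hab : a ≤ b) (hbc : WayBelow b c) : WayBelow a c :=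
  fun S hS hdir s hlub hcs => by
    obtain ⟨d, hd, hbd⟩ := hbc S hS hdir s hlub hcs
    exact ⟨d, hd, hab.trans hbd⟩

lemma wb_le_right' [Preorder D] {a b c : D} (hab : WayBelow a b) (hbc : b ≤ c) :
    WayBelow a c :=
  fun S hS hdir s hlub hcs => hab S hS hdir s hlub (hbc.trans hcs)

lemma wb_nonempty' [Preorder D] (hD : IsFuzzyDomain D) (b : D) :
    {a | WayBelow a b}.Nonempty := by
  rcases Set.eq_empty_or_nonempty {a | WayBelow a b} with he | h
  · have hlub := (hD.2 b).2
    rw [he] at hlub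
    have hleast : ∀ x, b ≤ x := fun x => hlub.2 (fun y hy => hy.elim)
    exact ⟨b, fun S hS _ s _ _ => hS.elim fun c hc => ⟨c, hc, hleast c⟩⟩
  · exact h

lemma wb_interp [Preorder D] (hD : IsFuzzyDomain D) {a b : D} (h : WayBelow a b) :
    ∃ c, WayBelow a c ∧ WayBelow c b := by
  set T := {x | ∃ y, WayBelow x y ∧ WayBelow y b} with hT
  have hTne : T.Nonempty := by
    obtain ⟨y, hy⟩ := wb_nonempty' hD b
    obtain ⟨x, hx⟩ := wb_nonempty' hD y
    exact ⟨x, y, hx, hy⟩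
  have hTdir : DirectedOn (· ≤ ·) T := by
    rintro x ⟨y, hxy, hyb⟩ x' ⟨y', hx'y', hy'b⟩
    obtain ⟨y3, hy3b, hy1, hy2⟩ := (hD.2 b).1 y hyb y' hy'b
    obtain ⟨x3, hx3y3, hxx3, hx'x3⟩ :=
      (hD.2 y3).1 x (wb_le_right' hxy hy1) x' (wb_le_right' hx'y' hy2)
    exact ⟨x3, ⟨y3, hx3y3, hy3b⟩, hxx3, hx'x3⟩
  obtain ⟨s, hs⟩ := hD.1 T hTne hTdir
  have hbs : b ≤ s := by
    refine (hD.2 b).2.2 fun y hy => ?_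
    refine (hD.2 y).2.2 fun z hz => ?_
    exact hs.1 ⟨y, hz, hy⟩
  obtain ⟨c, ⟨y, hcy, hyb⟩, hac⟩ := h T hTne hTdir s hs hbs
  exact ⟨y, le_wb' hac hcy, hyb⟩

theorem stmt_11 [PartialOrder D] [CompletelyDistribLattice L]
    (hD : IsFuzzyDomain D) (mul : L → L → L)
    (hassoc : ∀ a b c : L, mul (mul a b) c = mul a (mul b c))
    (hone : ∀ a : L, mul ⊤ a = a ∧ mul a ⊤ = a)
    (hsup₁ : ∀ (a : L) (S : Set L), mul a (sSup S) = ⨆ b ∈ S, mul a b)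
    (hsup₂ : ∀ (a : L) (S : Set L), mul (sSup S) a = ⨆ b ∈ S, mul b a)
    (α β : L) (m : D → L) (hm : IsMonPred m) :
    smulMP mul α (smulMP mul β m) = smulMP mul (mul α β) m := by
  have mono : ∀ (x : L) {y z : L}, y ≤ z → mul x y ≤ mul x z := by
    intro x y z hyz
    have h1 : mul x (sSup {y, z}) = ⨆ b ∈ ({y, z} : Set L), mul x b := hsup₁ x {y, z}
    rw [sSup_pair, sup_eq_right.2 hyz] at h1
    rw [h1]
    exact le_iSup₂_of_le y (Set.mem_insert y {z}) le_rfl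
  funext b
  simp only [smulMP, uHull]
  apply le_antisymm
  · refine le_iInf₂ fun a ha => ?_
    obtain ⟨c, hac, hcb⟩ := wb_interp hD ha
    calc (⨅ x ∈ {x | WayBelow x b}, mul α (⨅ y ∈ {y | WayBelow y x}, mul β (m y)))
        ≤ mul α (⨅ y ∈ {y | WayBelow y c}, mul β (m y)) :=
          iInf₂_le (f := fun x (_ : WayBelow x b) => mul α (⨅ y ∈ {y | WayBelow y x}, mul β (m y))) c hcb
      _ ≤ mul α (mul β (m a)) :=
          mono α (iInf₂_le (f := fun y (_ : WayBelow y c) => mul β (m y)) a hac)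
      _ = mul (mul α β) (m a) := (hassoc α β (m a)).symm
  · refine le_iInf₂ fun a ha => ?_
    have h1 : mul β (m a) ≤ ⨅ y ∈ {y | WayBelow y a}, mul β (m y) :=
      le_iInf₂ fun c hc => mono β (hm.1 (wb_le' hc))
    calc (⨅ x ∈ {x | WayBelow x b}, mul (mul α β) (m x))
        ≤ mul (mul α β) (m a) := iInf₂_le a ha
      _ = mul α (mul β (m a)) := hassoc α β (m a)
      _ ≤ mul α (⨅ y ∈ {y | WayBelow y a}, mul β (m y)) := mono α h1
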